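/- arXiv:1709.05983 — 4 statements merged into one kernel-verified Lean document; each statement's English description precedes it below -/
import Mathlib

section
/- Every automorphism of order 3 of Q = ℤ/2^n × ℤ/2^n generates a Sylow 3-subgroup of Aut(Q); equivalently, the Sylow 3-subgroups of Aut(ℤ/2^n × ℤ/2^n) have order 3. -/
/-!
Reduction mod 2 maps `Aut(ℤ/2^n × ℤ/2^n) ≅ GL₂(ℤ/2^n)` to `GL₂(𝔽₂)`, a group of order 6. Its
kernel consists of matrices `1 + 2C`, and squaring `k` times gives `(1 + 2C)^(2^k) ≡ 1 mod 2^(k+1)`,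
so the kernel is a 2-group. Hence every 3-subgroup embeds into `GL₂(𝔽₂)`, and a Sylow 3-subgroup,
which is nontrivial because of `θ`, has order exactly 3.
-/

/-- The multiplicative group structure on `AddAut A` (composition), as in the older Mathlib,
where `AddAut A` was a `Group`; current Mathlib makes it an `AddGroup` instead. -/
instance AddAut.group (A : Type*) [Add A] : Group (AddAut A) where
  mul g h := AddEquiv.trans h g
  one := AddEquiv.refl _
  inv := AddEquiv.symm
  mul_assoc _ _ _ := rfl
  one_mul _ := rfl
  mul_one _ := rfl
  inv_mul_cancel := AddEquiv.self_trans_symm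

theorem exists_one_add_two_smul_pow_two_pow_eq {R : Type*} [Ring R] (c : R) (k : ℕ) :
    ∃ d : R, (1 + 2 • c) ^ 2 ^ k = 1 + 2 ^ (k + 1) • d := by
  induction k with
  | zero => exact ⟨c, by simp⟩
  | succ k ih =>
    obtain ⟨d, hd⟩ := ih
    refine ⟨d + 2 ^ k • (d * d), ?_⟩
    rw [pow_succ, pow_mul, hd, sq]
    simp only [add_mul, mul_add, one_mul, mul_one, smul_mul_smul_comm]
    module

theorem one_add_two_smul_pow_two_pow_eq_one {R : Type*} [Ring R] {k : ℕ}
    (h : ((2 ^ (k + 1) : ℕ) : R) = 0) (c : R) : (1 + 2 • c) ^ 2 ^ k = 1 := by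
  obtain ⟨d, hd⟩ := exists_one_add_two_smul_pow_two_pow_eq c k
  rw [hd, nsmul_eq_mul, h, zero_mul, add_zero]

theorem ZMod.exists_eq_nsmul_of_castHom_eq_zero {m N : ℕ} (h : m ∣ N) {a : ZMod N}
    (ha : ZMod.castHom h (ZMod m) a = 0) : ∃ b : ZMod N, a = m • b := by
  obtain ⟨z, rfl⟩ := ZMod.intCast_surjective a
  rw [map_intCast, ZMod.intCast_zmod_eq_zero_iff_dvd] at ha
  obtain ⟨w, rfl⟩ := ha
  exact ⟨w, by push_cast; rw [nsmul_eq_mul]⟩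

theorem Matrix.exists_eq_one_add_nsmul_of_map_castHom_eq_one {ι : Type*} [DecidableEq ι]
    {m N : ℕ} (h : m ∣ N) {A : Matrix ι ι (ZMod N)} (hA : A.map (ZMod.castHom h (ZMod m)) = 1) :
    ∃ C : Matrix ι ι (ZMod N), A = 1 + m • C := by
  have hA' : (A - 1).map (ZMod.castHom h (ZMod m)) = 0 := by
    rw [Matrix.map_sub _ (map_sub _), Matrix.map_one _ (map_zero _) (map_one _), hA, sub_self]
  have hker (i j : ι) : ∃ b, (A - 1) i j = m • b :=
    ZMod.exists_eq_nsmul_of_castHom_eq_zero h (congrFun₂ hA' i j)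
  choose C hC using hker
  refine ⟨Matrix.of C, ?_⟩
  ext i j
  rw [Matrix.add_apply, Matrix.smul_apply, Matrix.of_apply, ← hC, Matrix.sub_apply, add_sub_cancel]

namespace Matrix.GeneralLinearGroup

theorem pow_two_pow_eq_one_of_map_castHom_eq_one {ι : Type*} [Fintype ι] [DecidableEq ι] {k : ℕ}
    {g : GL ι (ZMod (2 ^ (k + 1)))}
    (hg : map (ZMod.castHom (dvd_pow_self 2 k.succ_ne_zero) (ZMod 2)) g = 1) : g ^ 2 ^ k = 1 := by
  have hmap : (g : Matrix ι ι (ZMod (2 ^ (k + 1)))).map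
      (ZMod.castHom (dvd_pow_self 2 k.succ_ne_zero) (ZMod 2)) = 1 := congrArg Units.val hg
  obtain ⟨C, hC⟩ := exists_eq_one_add_nsmul_of_map_castHom_eq_one _ hmap
  ext1
  rw [Units.val_pow_eq_pow_val, hC, Units.val_one]
  refine one_add_two_smul_pow_two_pow_eq_one ?_ C
  rw [← map_natCast (Matrix.scalar ι), ZMod.natCast_self, map_zero]

end Matrix.GeneralLinearGroup

def AddAut.toZModLinearEquiv (m : ℕ) (M : Type*) [AddCommGroup M]
    [Module (ZMod m) M] : AddAut M ≃* (M ≃ₗ[ZMod m] M) where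
  toFun f := f.toLinearEquiv (ZMod.map_smul f)
  invFun g := g.toAddEquiv
  map_mul' _ _ := rfl

noncomputable def AddAut.zmodProdMulEquivGL (m : ℕ) :
    AddAut (ZMod m × ZMod m) ≃* GL (Fin 2) (ZMod m) :=
  (AddAut.toZModLinearEquiv m _).trans <|
    (LinearMap.GeneralLinearGroup.generalLinearEquiv _ _).symm.trans
      (Matrix.GeneralLinearGroup.toLin' (Module.Basis.finTwoProd _)).symm

theorem IsPGroup.card_dvd_of_isPGroup_ker {G H : Type*} [Group G] [Group H] {p q : ℕ}
    [Fact p.Prime] [Fact q.Prime] (hpq : p ≠ q) {P : Subgroup G} (hP : IsPGroup p P)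
    {f : G →* H} (hf : IsPGroup q f.ker) : Nat.card P ∣ Nat.card H := by
  refine Subgroup.card_dvd_of_injective (f.domRestrict P) ?_
  rw [← MonoidHom.ker_eq_bot_iff, MonoidHom.ker_domRestrict, Subgroup.subgroupOf_eq_bot]
  exact (IsPGroup.disjoint_of_ne p q hpq P f.ker hP hf).symm

theorem Sylow.card_eq_of_card_dvd_prime_mul {G : Type*} [Group G] [Finite G] {p m : ℕ}
    [Fact p.Prime] (P : Sylow p G) (hG : p ∣ Nat.card G) (hP : Nat.card P ∣ p * m)
    (hm : m.Coprime p) :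
    Nat.card P = p := by
  obtain ⟨k, hk⟩ := IsPGroup.iff_card.mp P.isPGroup'
  have hp : 1 < p := (Fact.out : p.Prime).one_lt
  rw [hk] at hP ⊢
  have hpos : 1 ≤ k := by
    refine (Nat.pow_dvd_pow_iff_le_right hp).mp ?_
    rw [pow_one, ← hk]
    exact P.dvd_card_of_dvd_card hG
  have hle : k ≤ 1 := by
    refine (Nat.pow_dvd_pow_iff_le_right hp).mp ?_
    rw [pow_one]
    exact (Nat.Coprime.pow_left k hm.symm).dvd_of_dvd_mul_right hP
  rw [le_antisymm hle hpos, pow_one]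

theorem card_GL_fin_two_zmod_two : Nat.card (GL (Fin 2) (ZMod 2)) = 6 := by
  rw [Matrix.card_GL_field]; simp [Fin.prod_univ_two]

/-- Every automorphism of order 3 of ℤ/2^n × ℤ/2^n generates a Sylow 3-subgroup of the
automorphism group; equivalently, Sylow 3-subgroups of Aut(ℤ/2^n × ℤ/2^n) have order 3. -/
theorem stmt3 (n : ℕ) (hn : 1 ≤ n)
    (θ : AddAut (ZMod (2 ^ n) × ZMod (2 ^ n))) (hθ : orderOf θ = 3) :
    (∃ S : Sylow 3 (AddAut (ZMod (2 ^ n) × ZMod (2 ^ n))),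
        (S : Subgroup (AddAut (ZMod (2 ^ n) × ZMod (2 ^ n)))) = Subgroup.zpowers θ)
    ∧ ∀ S : Sylow 3 (AddAut (ZMod (2 ^ n) × ZMod (2 ^ n))), Nat.card S = 3 := by
  obtain ⟨k, rfl⟩ := Nat.exists_eq_add_of_le' hn
  have : Fact (Nat.Prime 3) := ⟨Nat.prime_three⟩
  have : Fact (Nat.Prime 2) := ⟨Nat.prime_two⟩
  let reduce := (Matrix.GeneralLinearGroup.map (ZMod.castHom (dvd_pow_self 2 k.succ_ne_zero)
    (ZMod 2))).comp (AddAut.zmodProdMulEquivGL (2 ^ (k + 1))).toMonoidHom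
  have hker : IsPGroup 2 reduce.ker := fun g => ⟨k, Subtype.ext <|
    (AddAut.zmodProdMulEquivGL _).injective <| by
      simpa using Matrix.GeneralLinearGroup.pow_two_pow_eq_one_of_map_castHom_eq_one g.2⟩
  have hcard (S : Sylow 3 (AddAut (ZMod (2 ^ (k + 1)) × ZMod (2 ^ (k + 1))))) :
      Nat.card S = 3 := by
    have hdvd : Nat.card S ∣ 6 :=
      card_GL_fin_two_zmod_two ▸ S.isPGroup'.card_dvd_of_isPGroup_ker (by norm_num) hker
    exact S.card_eq_of_card_dvd_prime_mul (m := 2) (hθ ▸ orderOf_dvd_natCard θ) hdvd (by norm_num)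
  refine ⟨?_, hcard⟩
  have hθP : IsPGroup 3 (Subgroup.zpowers θ) :=
    IsPGroup.of_card (n := 1) (by rw [Nat.card_zpowers, hθ, pow_one])
  obtain ⟨S, hS⟩ := hθP.exists_le_sylow
  exact ⟨S, (Subgroup.eq_of_le_of_card_ge hS (by rw [hcard, Nat.card_zpowers, hθ])).symm⟩
end

section
/- An automorphism of Q = ℤ/2^n × ℤ/2^n of order 3 acts freely on the set of nontrivial elements of Q; that is, if θ ∈ Aut(Q) has order 3 and θ(x) = x for some x ∈ Q, then x = 1. -/
/-!
The 2-torsion of `Q` is a plane over `𝔽₂`. A fixed point `x ≠ 0` gives a fixed point `t ≠ 0` of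
order 2, and an automorphism of order dividing 3 of that plane fixing `t` is the identity: it could
only move another vector `s` to `s + t`, and then `θ³ s = s + t`. So `ψ = θ - 1` kills the
2-torsion, which makes `2 + ψ (ψ + 3)` nilpotent in `End Q`, as `Q` has exponent `2 ^ n`. Since
`θ³ = 1` gives `ψ * (1 + (2 + ψ (ψ + 3))) = 0` and `1 + nilpotent` is a unit, `θ = 1`.
-/

open Finset

theorem exists_nsmul_ne_zero_two_nsmul_eq_zero {G : Type*} [AddMonoid G] {n : ℕ} {x : G}
    (hx : x ≠ 0) (h : 2 ^ n • x = 0) : ∃ k : ℕ, k • x ≠ 0 ∧ 2 • k • x = 0 := by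
  obtain ⟨m, -, hm⟩ := (Nat.dvd_prime_pow Nat.prime_two).1 (addOrderOf_dvd_of_nsmul_eq_zero h)
  obtain ⟨m, rfl⟩ : ∃ k, m = k + 1 := Nat.exists_eq_add_one.2 <| Nat.pos_of_ne_zero <| by
    rintro rfl
    exact hx (AddMonoid.addOrderOf_eq_one_iff.1 hm)
  refine ⟨2 ^ m, nsmul_ne_zero_of_lt_addOrderOf (by positivity) ?_, ?_⟩
  · exact hm ▸ Nat.pow_lt_pow_succ one_lt_two
  · rw [smul_smul, ← pow_succ', ← hm, addOrderOf_nsmul_eq_zero]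

theorem card_two_nsmul_eq_zero_prod_le {G H : Type*} [AddCommGroup G] [AddCommGroup H]
    [Fintype G] [Fintype H] [DecidableEq G] [DecidableEq H] [IsAddCyclic G] [IsAddCyclic H] :
    #{y : G × H | 2 • y = 0} ≤ 4 :=
  calc #{y : G × H | 2 • y = 0}
      ≤ #(({a : G | 2 • a = 0} : Finset G) ×ˢ ({b : H | 2 • b = 0} : Finset H)) :=
        card_le_card fun y hy => by simpa [Prod.ext_iff] using hy
    _ ≤ 2 * 2 := by
      rw [card_product]
      exact Nat.mul_le_mul (IsAddCyclic.card_nsmul_eq_zero_le two_pos)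
        (IsAddCyclic.card_nsmul_eq_zero_le two_pos)

theorem AddAut.apply_apply_apply_of_three_nsmul_eq_zero {G : Type*} [AddCommGroup G]
    {θ : AddAut G} (hθ : 3 • θ = 0) (y : G) : θ (θ (θ y)) = y := by
  simpa [succ_nsmul, AddAut.add_apply] using congrArg (· y) hθ

theorem AddAut.apply_eq_self_of_two_nsmul_eq_zero {G : Type*} [AddCommGroup G] [Fintype G]
    [DecidableEq G] (hcard : #{y : G | 2 • y = 0} ≤ 4) {θ : AddAut G} (hθ : 3 • θ = 0)
    {t : G} (ht : t ≠ 0) (ht2 : 2 • t = 0) (hθt : θ t = t) {s : G} (hs2 : 2 • s = 0) :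
    θ s = s := by
  by_cases hs : s = 0
  · rw [hs, map_zero]
  by_cases hst : s = t
  · rw [hst, hθt]
  have hneg : ∀ y : G, 2 • y = 0 → -y = y := fun y hy => by
    rw [neg_eq_iff_add_eq_zero, ← two_nsmul, hy]
  have hts : t + s ≠ 0 := fun h => hst (by rw [← hneg t ht2, eq_neg_iff_add_eq_zero, add_comm, h])
  have hspan : ({0, t, s, t + s} : Finset G) = ({y | 2 • y = 0} : Finset G) := by
    refine eq_of_subset_of_card_le ?_ ?_
    · intro y hy
      simp only [mem_insert, mem_singleton] at hy
      rcases hy with rfl | rfl | rfl | rfl <;> simp [ht2, hs2]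
    · refine hcard.trans ?_
      rw [card_insert_of_notMem, card_insert_of_notMem, card_insert_of_notMem, card_singleton]
      all_goals simp [hs, ht, Ne.symm hs, Ne.symm ht, Ne.symm hst, Ne.symm hts]
  have hθs : θ s ∈ ({0, t, s, t + s} : Finset G) := by
    rw [hspan, mem_filter]
    exact ⟨mem_univ _, by rw [← map_nsmul, hs2, map_zero]⟩
  have hθ3 := AddAut.apply_apply_apply_of_three_nsmul_eq_zero hθ s
  simp only [mem_insert, mem_singleton] at hθs
  rcases hθs with h | h | h | h
  · exact absurd (θ.injective (h.trans (map_zero θ).symm)) hs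
  · exact absurd (θ.injective (h.trans hθt.symm)) hst
  · exact h
  · have h2 : θ (t + s) = s := by rw [map_add, hθt, h, ← add_assoc, ← two_nsmul, ht2, zero_add]
    rw [h, h2, h] at hθ3
    exact absurd (add_eq_right.1 hθ3) ht

namespace AddMonoid.End

variable {G : Type*} [AddCommGroup G] {n : ℕ}

theorem isNilpotent_of_two_torsion_le_ker (hG : ∀ y : G, 2 ^ n • y = 0) {a : AddMonoid.End G}
    (ha : ∀ y, 2 • y = 0 → a y = 0) : IsNilpotent a := by
  have key : ∀ k, ∀ y : G, 2 ^ k • y = 0 → (a ^ k) y = 0 := by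
    intro k
    induction k with
    | zero => simp
    | succ k ih =>
      intro y hy
      rw [pow_succ]
      refine ih (a y) ?_
      rw [← map_nsmul]
      exact ha _ (by rw [smul_smul, ← pow_succ', hy])
  exact ⟨n, AddMonoidHom.ext fun y => key n y (hG y)⟩

theorem eq_one_of_pow_three_eq_one (hG : ∀ y : G, 2 ^ n • y = 0) {f : AddMonoid.End G}
    (hf3 : f ^ 3 = 1) (hf : ∀ y, 2 • y = 0 → f y = y) : f = 1 := by
  have hψ : ∀ y, 2 • y = 0 → (f - 1) y = 0 := fun y hy => by
    show f y - y = 0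
    rw [hf y hy, sub_self]
  have hnil : IsNilpotent (2 + (f - 1) * (f - 1 + 3)) := by
    refine isNilpotent_of_two_torsion_le_ker hG fun y hy => ?_
    have : 2 • (f - 1 + 3) y = 0 := by rw [← map_nsmul, hy, map_zero]
    show 2 • y + (f - 1) ((f - 1 + 3) y) = 0
    rw [hy, zero_add, hψ _ this]
  have hfactor : (f - 1) * (1 + (2 + (f - 1) * (f - 1 + 3))) = 0 := by
    have : (f - 1) * (1 + (2 + (f - 1) * (f - 1 + 3))) = f ^ 3 - 1 := by noncomm_ring
    rw [this, hf3, sub_self]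
  exact sub_eq_zero.1 (hnil.isUnit_one_add.mul_left_eq_zero.1 hfactor)

end AddMonoid.End

theorem AddAut.eq_zero_of_three_nsmul_eq_zero {G : Type*} [AddCommGroup G] {n : ℕ}
    (hG : ∀ y : G, 2 ^ n • y = 0) {θ : AddAut G} (hθ : 3 • θ = 0)
    (hθ2 : ∀ y, 2 • y = 0 → θ y = y) : θ = 0 := by
  have hf : θ.toAddMonoidHom = (1 : AddMonoid.End G) :=
    AddMonoid.End.eq_one_of_pow_three_eq_one hG
      (AddMonoidHom.ext (AddAut.apply_apply_apply_of_three_nsmul_eq_zero hθ)) hθ2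
  exact AddEquiv.ext (DFunLike.congr_fun hf : _)

theorem stmt4_general (n : ℕ)
    (θ : AddAut (ZMod (2 ^ n) × ZMod (2 ^ n))) (hθ : addOrderOf θ = 3)
    (x : ZMod (2 ^ n) × ZMod (2 ^ n)) (hfix : θ x = x) : x = 0 := by
  by_contra hx
  have h3 : 3 • θ = 0 := hθ ▸ addOrderOf_nsmul_eq_zero θ
  have hexp : ∀ y : ZMod (2 ^ n) × ZMod (2 ^ n), 2 ^ n • y = 0 :=
    ZModModule.char_nsmul_eq_zero (2 ^ n)
  obtain ⟨k, hk0, hk2⟩ := exists_nsmul_ne_zero_two_nsmul_eq_zero hx (hexp x)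
  have hcard : #{y : ZMod (2 ^ n) × ZMod (2 ^ n) | 2 • y = 0} ≤ 4 :=
    card_two_nsmul_eq_zero_prod_le
  have hθ2 : ∀ y, 2 • y = 0 → θ y = y := fun _ =>
    AddAut.apply_eq_self_of_two_nsmul_eq_zero hcard h3 hk0 hk2 (by rw [map_nsmul, hfix])
  have hθ0 : θ = 0 := AddAut.eq_zero_of_three_nsmul_eq_zero hexp h3 hθ2
  simp [hθ0] at hθ

/-- An automorphism of order 3 of ℤ/2^n × ℤ/2^n acts freely on the nontrivial elements. -/
theorem stmt4 (n : ℕ) (hn : 1 ≤ n)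
    (θ : AddAut (ZMod (2 ^ n) × ZMod (2 ^ n))) (hθ : addOrderOf θ = 3)
    (x : ZMod (2 ^ n) × ZMod (2 ^ n)) (hfix : θ x = x) : x = 0 :=
  stmt4_general n θ hθ x hfix
end

section
/- Let a group E of odd order act on a finite 2-group P stabilizing a normal subgroup Q of P, such that [P, E] ≤ Q. Then E acts trivially on the quotient P/Q, and every coset of Q in P contains an element fixed by E; consequently P = Q · C_P(E). -/
/-!
Since `[P, E] ≤ Q`, every coset `xQ` is `E`-stable, and the point is to find an `E`-fixed element
in it. When `Q` is abelian, `σ ↦ x⁻¹ σ(x)` is a crossed homomorphism `E → Q`; as `|E|` is prime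
to `|Q|`, averaging over `E` and taking an `|E|`-th root in `Q` shows it is principal, which
yields a fixed point `x a`. In general, induct on `|P|`: the centre `Z` of the 2-group `Q` is a
nontrivial `E`-invariant abelian normal subgroup of `P`; by induction `xQ/Z` contains an
`E`-fixed point `yZ` of `P/Z`, and the abelian case applied to `yZ` finishes.
-/

open Subgroup

section CoprimeCohomology

variable {E A : Type*} [Group E] [Finite E] [CommGroup A] [MulDistribMulAction E A]

theorem exists_eq_div_smul_of_coprime (hcop : (Nat.card A).Coprime (Nat.card E)) {f : E → A}
    (hf : ∀ σ τ, f (σ * τ) = f σ * σ • f τ) : ∃ a : A, ∀ σ, f σ = a / σ • a := by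
  have := Fintype.ofFinite E
  -- `a` will be the `|E|`-th root of `∏ τ, f τ`, which exists and is unique by coprimality
  have hc : ∀ σ : E, σ • ∏ τ, f τ = ((f σ)⁻¹) ^ Nat.card E * ∏ τ, f τ := fun σ => calc
    σ • ∏ τ, f τ = ∏ τ, (f σ)⁻¹ * f (σ * τ) := by
      rw [Finset.smul_prod']
      exact Finset.prod_congr rfl fun τ _ => by rw [hf, inv_mul_cancel_left]
    _ = ((f σ)⁻¹) ^ Nat.card E * ∏ τ, f τ := by
      rw [Finset.prod_mul_distrib, Finset.prod_const, Finset.card_univ, Nat.card_eq_fintype_card,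
        Fintype.prod_equiv (Equiv.mulLeft σ) (fun τ => f (σ * τ)) f fun _ => rfl]
  have hbij := hcop.pow_left_bijective
  obtain ⟨a, ha⟩ := hbij.surjective (∏ τ, f τ)
  refine ⟨a, fun σ => ?_⟩
  have : σ • a = (f σ)⁻¹ * a := hbij.injective <| by
    simp only [← smul_pow', ha, hc, mul_pow]
  rw [this, div_mul_eq_div_div_swap, div_inv_eq_mul, div_self', one_mul]

end CoprimeCohomology

section InvariantSubgroup

variable {E P : Type*} [Group E] [Group P] [MulDistribMulAction E P]

abbrev Subgroup.mulDistribMulActionOfInvariant (H : Subgroup P)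
    (hH : ∀ σ : E, ∀ h ∈ H, σ • h ∈ H) : MulDistribMulAction E H where
  smul σ h := ⟨σ • (h : P), hH σ h h.2⟩
  one_smul h := Subtype.ext (one_smul E (h : P))
  mul_smul σ τ h := Subtype.ext (mul_smul σ τ (h : P))
  smul_mul σ g h := Subtype.ext (smul_mul' σ (g : P) h)
  smul_one σ := Subtype.ext (smul_one σ)

abbrev QuotientGroup.mulDistribMulActionOfInvariant (N : Subgroup P) [N.Normal]
    (hN : ∀ σ : E, ∀ n ∈ N, σ • n ∈ N) : MulDistribMulAction E (P ⧸ N) where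
  smul σ := QuotientGroup.map N N (MulDistribMulAction.toMonoidHom P σ) (hN σ)
  one_smul x := QuotientGroup.induction_on x fun x => congrArg _ (one_smul E x)
  mul_smul σ τ x := QuotientGroup.induction_on x fun x => congrArg _ (mul_smul σ τ x)
  smul_mul σ := map_mul (QuotientGroup.map N N (MulDistribMulAction.toMonoidHom P σ) (hN σ))
  smul_one σ := map_one (QuotientGroup.map N N (MulDistribMulAction.toMonoidHom P σ) (hN σ))

theorem Subgroup.smul_mem_centralizer_of_invariant {Q : Subgroup P}
    (hQ : ∀ σ : E, ∀ q ∈ Q, σ • q ∈ Q) (σ : E) {z : P} (hz : z ∈ centralizer (Q : Set P)) :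
    σ • z ∈ centralizer (Q : Set P) := by
  intro q hq
  have := congrArg (σ • ·) (hz (σ⁻¹ • q) (hQ σ⁻¹ q hq))
  simpa only [smul_mul', smul_inv_smul] using this

open scoped IsMulCommutative in
theorem exists_mem_smul_mul_eq_of_coprime [Finite E] (A : Subgroup P) [IsMulCommutative A]
    (hA : ∀ σ : E, ∀ a ∈ A, σ • a ∈ A) (hcop : (Nat.card A).Coprime (Nat.card E)) {y : P}
    (hy : ∀ σ : E, y⁻¹ * σ • y ∈ A) : ∃ a ∈ A, ∀ σ : E, σ • (y * a) = y * a := by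
  let := A.mulDistribMulActionOfInvariant hA
  obtain ⟨a, ha⟩ := exists_eq_div_smul_of_coprime hcop (f := fun σ => ⟨y⁻¹ * σ • y, hy σ⟩)
    fun σ τ => Subtype.ext <| by
      change y⁻¹ * (σ * τ) • y = y⁻¹ * σ • y * σ • (y⁻¹ * τ • y)
      rw [smul_mul', smul_inv', mul_smul]
      group
  refine ⟨a, a.2, fun σ => ?_⟩
  have hσ : y⁻¹ * σ • y = a / σ • (a : P) := congrArg Subtype.val (ha σ)
  rw [smul_mul', ← mul_inv_cancel_left y (σ • y), hσ, div_eq_mul_inv]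
  group

end InvariantSubgroup

theorem IsPGroup.centralizer_inf_ne_bot {P : Type*} [Group P] [Finite P] {p : ℕ} [Fact p.Prime]
    {Q : Subgroup P} (hQ : IsPGroup p Q) (hQ1 : Q ≠ ⊥) : centralizer (Q : Set P) ⊓ Q ≠ ⊥ := by
  have := (nontrivial_iff_ne_bot Q).mpr hQ1
  have := hQ.center_nontrivial
  obtain ⟨z, hz⟩ := exists_ne (1 : center Q)
  refine (ne_bot_iff_exists_ne_one).mpr ⟨⟨z, ?_, (z : Q).2⟩, fun h => hz ?_⟩
  · exact fun q hq => congrArg Subtype.val (mem_center_iff.mp z.2 ⟨q, hq⟩)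
  · exact Subtype.ext (Subtype.ext (congrArg Subtype.val h :))

theorem exists_fixed_inv_mul_mem_of_isPGroup {E : Type*} [Group E] [Finite E] {p : ℕ}
    [Fact p.Prime] {P : Type*} [Group P] [Finite P] [MulDistribMulAction E P]
    (Q : Subgroup P) [Q.Normal] (hQ : IsPGroup p Q) (hcop : (Nat.card Q).Coprime (Nat.card E))
    (hQinv : ∀ σ : E, ∀ q ∈ Q, σ • q ∈ Q) {x : P} (hx : ∀ σ : E, x⁻¹ * σ • x ∈ Q) :
    ∃ y : P, (∀ σ : E, σ • y = y) ∧ y⁻¹ * x ∈ Q := by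
  induction hn : Nat.card P using Nat.strong_induction_on generalizing P with
  | _ n ih =>
  by_cases hQ1 : Q = ⊥
  · subst hQ1
    exact ⟨x, fun σ => (inv_mul_eq_one.mp (hx σ)).symm, by simp⟩
  -- the centre of `Q`, as a subgroup of `P`
  set Z := centralizer (Q : Set P) ⊓ Q
  have hZQ : Z ≤ Q := inf_le_right
  have hZinv : ∀ σ : E, ∀ z ∈ Z, σ • z ∈ Z := fun σ z hz =>
    ⟨smul_mem_centralizer_of_invariant hQinv σ hz.1, hQinv σ z hz.2⟩
  have : IsMulCommutative Z :=
    .of_setLike_mul_comm fun a ha b hb => (ha.1 b hb.2).symm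
  let := QuotientGroup.mulDistribMulActionOfInvariant Z hZinv
  have hcard : Nat.card (P ⧸ Z) < n := by
    rw [← hn, card_eq_card_quotient_mul_card_subgroup Z]
    exact lt_mul_right Nat.card_pos
      ((one_lt_card_iff_ne_bot Z).mpr (hQ.centralizer_inf_ne_bot hQ1))
  have hmem : ∀ g : P, (g : P ⧸ Z) ∈ Q.map (QuotientGroup.mk' Z) ↔ g ∈ Q := fun g => by
    change QuotientGroup.mk' Z g ∈ _ ↔ _
    rw [← mem_comap, QuotientGroup.comap_map_mk', sup_eq_right.mpr hZQ]
  obtain ⟨ybar, hybar, hybarx⟩ := ih _ hcard (Q.map (QuotientGroup.mk' Z)) (hQ.map _)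
    (hcop.coprime_dvd_left (card_map_dvd ..))
    (fun σ q hq => by
      obtain ⟨q, hq, rfl⟩ := hq
      exact (hmem _).mpr (hQinv σ q hq))
    (x := x) (fun σ => (hmem _).mpr (hx σ)) rfl
  obtain ⟨y, rfl⟩ := QuotientGroup.mk_surjective ybar
  have hy : ∀ σ : E, y⁻¹ * σ • y ∈ Z := fun σ => QuotientGroup.eq.mp (hybar σ).symm
  obtain ⟨a, haZ, ha⟩ := exists_mem_smul_mul_eq_of_coprime Z hZinv
    (hcop.coprime_dvd_left (card_dvd_of_le hZQ)) hy
  refine ⟨y * a, ha, ?_⟩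
  rw [mul_inv_rev, mul_assoc]
  exact Q.mul_mem (Q.inv_mem (hZQ haZ)) ((hmem _).mp hybarx)

/-- Glauberman's lemma instance: a group `E` of odd order acting on a finite 2-group `P`,
stabilizing a normal subgroup `Q` with `[P,E] ≤ Q`, acts trivially on `P/Q`, every coset of
`Q` contains an `E`-fixed element, and `P = Q · C_P(E)`. -/
theorem stmt7 (P E : Type) [Group P] [Finite P] (hP : IsPGroup 2 P)
    [Group E] [Finite E] (hE : Odd (Nat.card E)) [MulDistribMulAction E P]
    (Q : Subgroup P) [Q.Normal]
    (hQinv : ∀ (e : E), ∀ q ∈ Q, e • q ∈ Q)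
    (hPE : ∀ (e : E) (x : P), x⁻¹ * (e • x) ∈ Q) :
    (∀ (e : E) (x : P), (QuotientGroup.mk (e • x) : P ⧸ Q) = QuotientGroup.mk x)
    ∧ (∀ x : P, ∃ y : P, (∀ e : E, e • y = y) ∧ y⁻¹ * x ∈ Q)
    ∧ (∀ x : P, ∃ q ∈ Q, ∃ r : P, (∀ e : E, e • r = r) ∧ x = q * r) := by
  have := Fact.mk Nat.prime_two
  have hQ : IsPGroup 2 Q := hP.to_subgroup Q
  have hcop : (Nat.card Q).Coprime (Nat.card E) := by
    obtain ⟨k, hk⟩ := IsPGroup.iff_card.mp hQ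
    exact hk ▸ (Nat.coprime_two_left.mpr hE).pow_left k
  have hfixed (x : P) : ∃ y : P, (∀ e : E, e • y = y) ∧ y⁻¹ * x ∈ Q :=
    exists_fixed_inv_mul_mem_of_isPGroup Q hQ hcop hQinv (hPE · x)
  refine ⟨fun e x => (QuotientGroup.eq.mpr (hPE e x)).symm, hfixed, fun x => ?_⟩
  obtain ⟨y, hy, hyx⟩ := hfixed x
  exact ⟨x * y⁻¹, by simpa [mul_assoc] using ‹Q.Normal›.conj_mem _ hyx x, y, hy, by group⟩
end

section
/- In the wreath product P = ℤ/4 ≀ ℤ/2 with base group Q = ⟨x, y⟩ ≅ ℤ/4 × ℤ/4 and swapping element z, let Y = ⟨xy, x², z⟩. Then the three subgroups Q₁ = ⟨xy, x²⟩, Q₂ = ⟨xy, x²z⟩, Q₃ = ⟨xy, z⟩ of Y are pairwise distinct subgroups of Y of index 2, and among them only Q₁ is contained in Q. -/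
/-!
Triples `(a, b, c) ∈ ℤ/4 × ℤ/4 × ℤ/2`, multiplied as the normal forms `x^a y^b z^c`, form a
model of `ℤ/4 ≀ ℤ/2`. The defining relations make `(a, b, c) ↦ x^a y^b z^c` a homomorphism into
`P`; it is onto because `x, y, z` generate `P`, hence an isomorphism as both groups have order 32.
In the model all subgroups are explicit: `Q = {c = 0}`, `Y = {a ≡ b mod 2}`, `Q₁ = Q ∩ Y`,
`Q₂ = {a - b = 2c}` and `Q₃ = {a = b}`, and every claim becomes a finite check.
-/

lemma zmod_two_eq_zero_or_one (c : ZMod 2) : c = 0 ∨ c = 1 := by decide +revert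

lemma pow_zmod_val_add {G : Type*} [Group G] {n : ℕ} [NeZero n] {g : G} (hg : g ^ n = 1)
    (a b : ZMod n) : g ^ (a + b).val = g ^ a.val * g ^ b.val := by
  rw [ZMod.val_add, ← pow_eq_pow_mod _ hg, pow_add]

lemma Subgroup.closure_pair_eq_of_forall_exists_pow {G : Type*} [Group G] {a b : G}
    {H : Subgroup G} {m n : ℕ} (ha : a ∈ H) (hb : b ∈ H)
    (h : ∀ g ∈ H, ∃ (i : Fin m) (j : Fin n), a ^ (i : ℕ) * b ^ (j : ℕ) = g) :
    Subgroup.closure {a, b} = H := by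
  refine le_antisymm ((Subgroup.closure_le _).2 (Set.pair_subset ha hb)) fun g hg => ?_
  obtain ⟨i, j, rfl⟩ := h g hg
  exact mul_mem (pow_mem (Subgroup.subset_closure (by simp)) _)
    (pow_mem (Subgroup.subset_closure (by simp)) _)

structure Z4WrZ2 where
  a : ZMod 4
  b : ZMod 4
  c : ZMod 2
  deriving DecidableEq, Fintype

namespace Z4WrZ2

instance : One Z4WrZ2 := ⟨⟨0, 0, 0⟩⟩

instance : Mul Z4WrZ2 := ⟨fun p q =>
  if p.c = 0 then ⟨p.a + q.a, p.b + q.b, q.c⟩ else ⟨p.a + q.b, p.b + q.a, 1 + q.c⟩⟩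

instance : Inv Z4WrZ2 := ⟨fun p => if p.c = 0 then ⟨-p.a, -p.b, 0⟩ else ⟨-p.b, -p.a, 1⟩⟩

lemma one_def : (1 : Z4WrZ2) = ⟨0, 0, 0⟩ := rfl

lemma mul_def (p q : Z4WrZ2) : p * q =
    if p.c = 0 then ⟨p.a + q.a, p.b + q.b, q.c⟩ else ⟨p.a + q.b, p.b + q.a, 1 + q.c⟩ := rfl

lemma inv_def (p : Z4WrZ2) :
    p⁻¹ = if p.c = 0 then ⟨-p.a, -p.b, 0⟩ else ⟨-p.b, -p.a, 1⟩ := rfl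

instance : Group Z4WrZ2 where
  mul_assoc := by
    rintro ⟨a₁, b₁, c₁⟩ ⟨a₂, b₂, c₂⟩ ⟨a₃, b₃, c₃⟩
    obtain rfl | rfl := zmod_two_eq_zero_or_one c₁ <;>
      obtain rfl | rfl := zmod_two_eq_zero_or_one c₂ <;>
      simp [mul_def, ← add_assoc, CharTwo.add_self_eq_zero]
  one_mul p := by simp [mul_def, one_def]
  mul_one := by
    rintro ⟨a, b, c⟩
    obtain rfl | rfl := zmod_two_eq_zero_or_one c <;> simp [mul_def, one_def]
  inv_mul_cancel := by
    rintro ⟨a, b, c⟩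
    obtain rfl | rfl := zmod_two_eq_zero_or_one c <;>
      simp [mul_def, one_def, inv_def, CharTwo.add_self_eq_zero]

section Lift

variable {G : Type*} [Group G] {x y z : G}

def lift (hx : x ^ 4 = 1) (hy : y ^ 4 = 1) (hz : z ^ 2 = 1) (hxy : Commute x y)
    (hzx : z * x * z = y) : Z4WrZ2 →* G where
  toFun p := x ^ p.a.val * y ^ p.b.val * z ^ p.c.val
  map_one' := by simp [one_def]
  map_mul' := by
    have hzz : z * z = 1 := by rw [← sq, hz]
    have sx : SemiconjBy z x y := by rw [SemiconjBy, ← hzx, mul_assoc, hzz, mul_one]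
    have sy : SemiconjBy z y x := by
      rw [SemiconjBy, ← hzx, ← mul_assoc, ← mul_assoc, hzz, one_mul]
    have hzx' (n : ℕ) (w : G) : z * (x ^ n * w) = y ^ n * (z * w) := by
      rw [← mul_assoc, (sx.pow_right n).eq, mul_assoc]
    have hzy' (n : ℕ) (w : G) : z * (y ^ n * w) = x ^ n * (z * w) := by
      rw [← mul_assoc, (sy.pow_right n).eq, mul_assoc]
    rintro ⟨a₁, b₁, c₁⟩ ⟨a₂, b₂, c₂⟩
    obtain rfl | rfl := zmod_two_eq_zero_or_one c₁
    · simp only [mul_def, if_pos, pow_zmod_val_add hx, pow_zmod_val_add hy, ZMod.val_zero,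
        pow_zero, mul_one, mul_assoc]
      rw [(hxy.pow_pow _ _).left_comm]
    · simp only [mul_def, one_ne_zero, if_false, pow_zmod_val_add hx, pow_zmod_val_add hy,
        pow_zmod_val_add hz, ZMod.val_one, pow_one, mul_assoc, hzx', hzy']
      rw [(hxy.pow_pow b₂.val b₁.val).left_comm, (hxy.pow_pow b₂.val a₂.val).left_comm]

end Lift

def gx : Z4WrZ2 := ⟨1, 0, 0⟩
def gy : Z4WrZ2 := ⟨0, 1, 0⟩
def gz : Z4WrZ2 := ⟨0, 0, 1⟩

theorem exists_injective_hom {G : Type*} [Group G] {x y z : G} (hx : x ^ 4 = 1)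
    (hy : y ^ 4 = 1) (hz : z ^ 2 = 1) (hxy : Commute x y) (hzx : z * x * z = y)
    (hgen : Subgroup.closure {x, y, z} = ⊤) (hcard : Nat.card G = 32) :
    ∃ f : Z4WrZ2 →* G, Function.Injective f ∧ f gx = x ∧ f gy = y ∧ f gz = z := by
  set f := lift hx hy hz hxy hzx
  have hfx : f gx = x := by simp [f, lift, gx, ZMod.val_one_eq_one_mod]
  have hfy : f gy = y := by simp [f, lift, gy, ZMod.val_one_eq_one_mod]
  have hfz : f gz = z := by simp [f, lift, gz, ZMod.val_one_eq_one_mod]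
  have hsurj : Function.Surjective f := by
    rw [← MonoidHom.range_eq_top, eq_top_iff, ← hgen, Subgroup.closure_le]
    rintro g (rfl | rfl | rfl)
    exacts [⟨gx, hfx⟩, ⟨gy, hfy⟩, ⟨gz, hfz⟩]
  have hcard' : Nat.card Z4WrZ2 = Nat.card G := by rw [hcard, Nat.card_eq_fintype_card]; rfl
  exact ⟨f, ((Nat.bijective_iff_surjective_and_card f).2 ⟨hsurj, hcard'⟩).1, hfx, hfy, hfz⟩

def Q : Subgroup Z4WrZ2 where
  carrier := {p | p.c = 0}
  one_mem' := rfl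
  mul_mem' {p q} := by revert p q; decide
  inv_mem' {p} := by revert p; decide

def Y : Subgroup Z4WrZ2 where
  carrier := {p | 2 * (p.a - p.b) = 0}
  one_mem' := rfl
  mul_mem' {p q} := by revert p q; decide
  inv_mem' {p} := by revert p; decide

def Q₁ : Subgroup Z4WrZ2 where
  carrier := {p | p.c = 0 ∧ 2 * (p.a - p.b) = 0}
  one_mem' := ⟨rfl, rfl⟩
  mul_mem' {p q} := by revert p q; decide
  inv_mem' {p} := by revert p; decide

def Q₂ : Subgroup Z4WrZ2 where
  carrier := {p | p.a - p.b = 2 * p.c.val}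
  one_mem' := rfl
  mul_mem' {p q} := by revert p q; decide
  inv_mem' {p} := by revert p; decide

def Q₃ : Subgroup Z4WrZ2 where
  carrier := {p | p.a = p.b}
  one_mem' := rfl
  mul_mem' {p q} := by revert p q; decide
  inv_mem' {p} := by revert p; decide

instance : DecidablePred (· ∈ Q) := fun p => inferInstanceAs (Decidable (p.c = 0))
instance : DecidablePred (· ∈ Y) := fun p => inferInstanceAs (Decidable (2 * (p.a - p.b) = 0))
instance : DecidablePred (· ∈ Q₁) := fun p =>
  inferInstanceAs (Decidable (p.c = 0 ∧ 2 * (p.a - p.b) = 0))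
instance : DecidablePred (· ∈ Q₂) := fun p =>
  inferInstanceAs (Decidable (p.a - p.b = 2 * p.c.val))
instance : DecidablePred (· ∈ Q₃) := fun p => inferInstanceAs (Decidable (p.a = p.b))

open Subgroup

lemma closure_eq_Q : closure {gx, gy} = Q :=
  closure_pair_eq_of_forall_exists_pow (m := 4) (n := 4) (by decide) (by decide) (by decide)

lemma closure_eq_Q₁ : closure {gx * gy, gx ^ 2} = Q₁ :=
  closure_pair_eq_of_forall_exists_pow (m := 4) (n := 2) (by decide) (by decide) (by decide)

lemma closure_eq_Q₂ : closure {gx * gy, gx ^ 2 * gz} = Q₂ :=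
  closure_pair_eq_of_forall_exists_pow (m := 4) (n := 2) (by decide) (by decide) (by decide)

lemma closure_eq_Q₃ : closure {gx * gy, gz} = Q₃ :=
  closure_pair_eq_of_forall_exists_pow (m := 4) (n := 2) (by decide) (by decide) (by decide)

lemma closure_eq_Y : closure {gx * gy, gx ^ 2, gz} = Y := by
  refine le_antisymm ((closure_le _).2 ?_) fun p hp => ?_
  · simp only [Set.insert_subset_iff, Set.singleton_subset_iff, SetLike.mem_coe]
    decide
  · obtain ⟨i, j, k, rfl⟩ : ∃ (i : Fin 4) (j : Fin 2) (k : Fin 2),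
        (gx * gy) ^ (i : ℕ) * (gx ^ 2) ^ (j : ℕ) * gz ^ (k : ℕ) = p := by
      revert p hp; decide
    exact mul_mem (mul_mem (pow_mem (subset_closure (by simp)) _)
      (pow_mem (subset_closure (by simp)) _)) (pow_mem (subset_closure (by simp)) _)

theorem index_two_subgroups :
    let Q : Subgroup Z4WrZ2 := Subgroup.closure {gx, gy}
    let Y : Subgroup Z4WrZ2 := Subgroup.closure {gx * gy, gx ^ 2, gz}
    let Q1 : Subgroup Z4WrZ2 := Subgroup.closure {gx * gy, gx ^ 2}
    let Q2 : Subgroup Z4WrZ2 := Subgroup.closure {gx * gy, gx ^ 2 * gz}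
    let Q3 : Subgroup Z4WrZ2 := Subgroup.closure {gx * gy, gz}
    Q1 ≠ Q2 ∧ Q1 ≠ Q3 ∧ Q2 ≠ Q3
    ∧ Q1 ≤ Y ∧ Q2 ≤ Y ∧ Q3 ≤ Y
    ∧ Q1.relIndex Y = 2 ∧ Q2.relIndex Y = 2 ∧ Q3.relIndex Y = 2
    ∧ Q1 ≤ Q ∧ ¬ Q2 ≤ Q ∧ ¬ Q3 ≤ Q := by
  simp only [closure_eq_Q, closure_eq_Y, closure_eq_Q₁, closure_eq_Q₂, closure_eq_Q₃, ne_eq,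
    SetLike.ext_iff, SetLike.le_def, relIndex_eq_two_iff]
  decide

end Z4WrZ2

/-- In `P = ℤ/4 ≀ ℤ/2` with base group `Q = ⟨x,y⟩` and swapping element `z`, the subgroups
`Q₁ = ⟨xy, x²⟩`, `Q₂ = ⟨xy, x²z⟩`, `Q₃ = ⟨xy, z⟩` of `Y = ⟨xy, x², z⟩` are pairwise distinct
of index 2 in `Y`, and among them only `Q₁` is contained in `Q`. -/
theorem stmt10 (P : Type) [Group P] (x y z : P)
    (hx : x ^ 4 = 1) (hy : y ^ 4 = 1) (hz : z ^ 2 = 1)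
    (hxy : x * y = y * x) (hzx : z * x * z = y)
    (hgen : Subgroup.closure {x, y, z} = ⊤)
    (hcard : Nat.card P = 32) :
    let Q : Subgroup P := Subgroup.closure {x, y}
    let Y : Subgroup P := Subgroup.closure {x * y, x ^ 2, z}
    let Q1 : Subgroup P := Subgroup.closure {x * y, x ^ 2}
    let Q2 : Subgroup P := Subgroup.closure {x * y, x ^ 2 * z}
    let Q3 : Subgroup P := Subgroup.closure {x * y, z}
    Q1 ≠ Q2 ∧ Q1 ≠ Q3 ∧ Q2 ≠ Q3
    ∧ Q1 ≤ Y ∧ Q2 ≤ Y ∧ Q3 ≤ Y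
    ∧ Q1.relIndex Y = 2 ∧ Q2.relIndex Y = 2 ∧ Q3.relIndex Y = 2
    ∧ Q1 ≤ Q ∧ ¬ Q2 ≤ Q ∧ ¬ Q3 ≤ Q := by
  obtain ⟨f, hf, rfl, rfl, rfl⟩ := Z4WrZ2.exists_injective_hom hx hy hz hxy hzx hgen hcard
  simpa only [← map_mul, ← map_pow, ← Set.image_pair, ← Set.image_insert_eq,
    ← MonoidHom.map_closure, (Subgroup.map_injective hf).ne_iff,
    Subgroup.map_le_map_iff_of_injective hf, Subgroup.relIndex_map_map_of_injective _ _ hf]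
    using Z4WrZ2.index_two_subgroups
end
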